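/- arXiv:0905.2212 — 3 statements merged into one kernel-verified Lean document; each statement's English description precedes it below -/
import Mathlib

section
/- Let m ≥ 1 and let A be a symmetric m×m matrix over ℂ. Let p_A(Z) ∈ (ℂ[T])[Z] be the Mulmuley polynomial of A, and let s be the multiplicity of 0 as a root of p_A(Z), i.e., the largest integer s such that Z^s divides p_A(Z). Then the rank of A equals m − s. (This is Mulmuley's rank theorem as described and used in Section 2.7 of the paper; the symmetry hypothesis holds in all of the paper's applications, since the method is applied to the symmetrized block matrix.) -/
/-!
Let `r = rank A` and let the columns of `B` be a basis of the column space of `A` in echelon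
form. Symmetry gives `A = B S Bᵀ` with `S` invertible, so `X A = (X B) (S Bᵀ)` and the
characteristic polynomial of `X A` is `Z ^ (m - r)` times that of the `r × r` matrix
`S (Bᵀ X B)`. The latter has nonzero constant term because the Gram determinant
`det (Bᵀ X B)` is a nonzero polynomial in `T`: since the pivots of `B` are distinct, its
coefficient of `T ^ (sum of the pivot positions)` comes from the diagonal term alone and is
the product of the squared pivot entries.
-/

open Polynomial Matrix Module

/-- The Mulmuley polynomial of a square matrix `B` of size `N` over `ℂ`:
the characteristic polynomial `det(Z·I − X·B)` of `X·B`, where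
`X = diag(1, T, T², …, T^{N−1})` over the polynomial ring `ℂ[T]`.
It is an element of `(ℂ[T])[Z]`. -/
noncomputable def mulmuleyPoly {N : ℕ} (B : Matrix (Fin N) (Fin N) ℂ) :
    Polynomial (Polynomial ℂ) :=
  Matrix.charpoly
    ((Matrix.diagonal fun i : Fin N => (Polynomial.X : Polynomial ℂ) ^ (i : ℕ)) *
      B.map Polynomial.C)

theorem Polynomial.coeff_prod_sum_of_X_pow_dvd {R ι : Type*} [CommSemiring R] (s : Finset ι)
    (f : ι → R[X]) (d : ι → ℕ) (h : ∀ i ∈ s, X ^ d i ∣ f i) :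
    (∏ i ∈ s, f i).coeff (∑ i ∈ s, d i) = ∏ i ∈ s, (f i).coeff (d i) := by
  choose! g hg using h
  have hprod : ∏ i ∈ s, f i = X ^ (∑ i ∈ s, d i) * ∏ i ∈ s, g i := by
    rw [← Finset.prod_pow_eq_pow_sum, ← Finset.prod_mul_distrib]
    exact Finset.prod_congr rfl hg
  rw [hprod, coeff_X_pow_mul', if_pos le_rfl, Nat.sub_self, coeff_zero_prod]
  refine Finset.prod_congr rfl fun i hi => ?_
  rw [hg i hi, coeff_X_pow_mul', if_pos le_rfl, Nat.sub_self]

theorem Finset.sum_lt_sum_max_comp_of_ne_one {ι : Type*} [Fintype ι] {p : ι → ℕ}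
    (hp : Function.Injective p) {σ : Equiv.Perm ι} (hσ : σ ≠ 1) :
    ∑ i, p i < ∑ i, max (p (σ i)) (p i) := by
  refine lt_of_le_of_ne (Finset.sum_le_sum fun i _ => le_max_right _ _) fun heq => hσ ?_
  have hmax := (Finset.sum_eq_sum_iff_of_le fun i _ => le_max_right (p (σ i)) (p i)).mp heq
  have hle : ∀ i ∈ Finset.univ, p (σ i) ≤ p i := fun i hi =>
    max_eq_right_iff.mp (hmax i hi).symm
  have hfix := (Finset.sum_eq_sum_iff_of_le hle).mp (Equiv.sum_comp σ p)
  exact Equiv.ext fun i => hp (hfix i (Finset.mem_univ i))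

namespace Matrix

theorem coeff_det_sum_of_X_pow_max_dvd {R n : Type*} [CommRing R] [Fintype n] [DecidableEq n]
    (G : Matrix n n R[X]) {p : n → ℕ} (hp : Function.Injective p)
    (hG : ∀ i j, X ^ max (p i) (p j) ∣ G i j) :
    G.det.coeff (∑ i, p i) = ∏ i, (G i i).coeff (p i) := by
  rw [det_apply, finsetSum_coeff, Finset.sum_eq_single 1]
  · simp only [Equiv.Perm.sign_one, one_smul, Equiv.Perm.one_apply]
    exact coeff_prod_sum_of_X_pow_dvd _ _ _ fun i _ => by simpa using hG i i
  · intro σ _ hσ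
    have hdvd : X ^ (∑ i, max (p (σ i)) (p i)) ∣ ∏ i, G (σ i) i := by
      rw [← Finset.prod_pow_eq_pow_sum]
      exact Finset.prod_dvd_prod_of_dvd _ _ fun i _ => hG (σ i) i
    rw [coeff_smul, X_pow_dvd_iff.mp hdvd _ (Finset.sum_lt_sum_max_comp_of_ne_one hp hσ),
      smul_zero]
  · simp

section Gram

variable {R ι : Type*} [CommRing R] {m : ℕ}

noncomputable def weightedGram (U : Matrix ι (Fin m) R) : Matrix ι ι R[X] :=
  U.map C * diagonal (fun k : Fin m => (X : R[X]) ^ (k : ℕ)) * (U.map C)ᵀ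

theorem weightedGram_apply (U : Matrix ι (Fin m) R) (i j : ι) :
    weightedGram U i j = ∑ k : Fin m, C (U i k * U j k) * X ^ (k : ℕ) := by
  rw [weightedGram, mul_apply]
  refine Finset.sum_congr rfl fun k _ => ?_
  rw [mul_diagonal, map_apply, transpose_apply, map_apply, C_mul]
  ring

theorem X_pow_max_dvd_weightedGram_apply (U : Matrix ι (Fin m) R) {p : ι → Fin m}
    (hU : ∀ i, U.IsLeadingEntry i (p i)) (i j : ι) :
    X ^ max (p i : ℕ) (p j) ∣ weightedGram U i j := by
  rw [weightedGram_apply]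
  refine Finset.dvd_sum fun k _ => ?_
  rcases lt_or_ge (k : ℕ) (max (p i : ℕ) (p j)) with hk | hk
  · rcases lt_max_iff.mp hk with hk | hk
    · simp [(hU i).1 k hk]
    · simp [(hU j).1 k hk]
  · exact (pow_dvd_pow X hk).mul_left _

theorem coeff_weightedGram_apply_self (U : Matrix ι (Fin m) R) (i : ι) (c : Fin m) :
    (weightedGram U i i).coeff c = U i c ^ 2 := by
  simp only [weightedGram_apply, finsetSum_coeff, coeff_C_mul_X_pow, Fin.val_inj,
    Finset.sum_ite_eq, Finset.mem_univ, if_true, sq]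

theorem det_weightedGram_ne_zero [IsDomain R] [Fintype ι] [DecidableEq ι]
    (U : Matrix ι (Fin m) R) {p : ι → Fin m} (hp : Function.Injective p)
    (hU : ∀ i, U.IsLeadingEntry i (p i)) :
    (weightedGram U).det ≠ 0 := by
  intro hdet
  have hcoeff := coeff_det_sum_of_X_pow_max_dvd _ (Fin.val_injective.comp hp)
    (X_pow_max_dvd_weightedGram_apply U hU)
  simp only [hdet, coeff_zero, Function.comp_apply, coeff_weightedGram_apply_self] at hcoeff
  exact Finset.prod_ne_zero_iff.mpr (fun i _ => pow_ne_zero 2 (hU i).2) hcoeff.symm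

end Gram

theorem rootMultiplicity_zero_charpoly_eq_zero {R n : Type*} [CommRing R] [IsDomain R]
    [Fintype n] [DecidableEq n] {M : Matrix n n R} (hM : M.det ≠ 0) :
    M.charpoly.rootMultiplicity 0 = 0 := by
  refine rootMultiplicity_eq_zero fun hroot => hM ?_
  rw [det_eq_sign_charpoly_coeff, coeff_zero_eq_eval_zero, hroot.eq_zero, mul_zero]

theorem rootMultiplicity_zero_charpoly_mul {R m n : Type*} [CommRing R] [IsDomain R]
    [Fintype m] [DecidableEq m] [Fintype n] [DecidableEq n] (U : Matrix m n R)
    (V : Matrix n m R) (hle : Fintype.card n ≤ Fintype.card m) (hVU : (V * U).det ≠ 0) :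
    (U * V).charpoly.rootMultiplicity 0 = Fintype.card m - Fintype.card n := by
  rw [charpoly_mul_comm_of_le U V hle,
    rootMultiplicity_mul ((monic_X_pow _).mul (charpoly_monic _)).ne_zero,
    rootMultiplicity_zero_charpoly_eq_zero hVU, add_zero]
  simpa using rootMultiplicity_X_sub_C_pow (0 : R) (Fintype.card m - Fintype.card n)

section Field

variable {K l m n : Type*} [Field K] [Fintype n]

theorem mulVec_injective_of_rank_eq_card {M : Matrix m n K} (h : M.rank = Fintype.card n) :
    Function.Injective M.mulVec := by
  rw [mulVec_injective_iff, linearIndependent_iff_card_eq_finrank_span, Set.finrank,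
    ← rank_eq_finrank_span_cols, h]

theorem det_ne_zero_of_rank_eq_card [DecidableEq n] {M : Matrix n n K}
    (h : M.rank = Fintype.card n) : M.det ≠ 0 :=
  ((isUnit_iff_isUnit_det M).mp
    (mulVec_injective_iff_isUnit.mp (mulVec_injective_of_rank_eq_card h))).ne_zero

theorem exists_mul_eq_one_of_rank_eq_card [Fintype m] [DecidableEq m] [DecidableEq n]
    {B : Matrix m n K} (h : B.rank = Fintype.card n) : ∃ L : Matrix n m K, L * B = 1 := by
  obtain ⟨g, hg⟩ := B.mulVecLin.exists_leftInverse_of_injective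
    (LinearMap.ker_eq_bot.mpr (mulVec_injective_of_rank_eq_card h))
  refine ⟨LinearMap.toMatrix' g, ?_⟩
  rw [← LinearMap.toMatrix'_toLin' B, ← LinearMap.toMatrix'_comp, toLin'_apply', hg,
    LinearMap.toMatrix'_id]

theorem mul_mul_eq_self_of_range_le [Fintype m] [Fintype l] [DecidableEq n]
    {B : Matrix m n K} {L : Matrix n m K} (hLB : L * B = 1) {A : Matrix m l K}
    (hA : LinearMap.range A.mulVecLin ≤ LinearMap.range B.mulVecLin) : B * L * A = A := by
  classical
  refine ext_of_mulVec_single fun i => ?_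
  obtain ⟨y, hy⟩ := hA ⟨Pi.single i 1, rfl⟩
  simp only [mulVecLin_apply] at hy
  rw [← mulVec_mulVec, ← hy, mulVec_mulVec, Matrix.mul_assoc, hLB, Matrix.mul_one]

theorem IsSymm.exists_det_ne_zero_eq_mul_mul_transpose [Fintype m] [DecidableEq m]
    [DecidableEq n] {A : Matrix m m K} (hA : A.IsSymm) {B : Matrix m n K}
    (hBA : LinearMap.range B.mulVecLin = LinearMap.range A.mulVecLin)
    (hrank : A.rank = Fintype.card n) :
    ∃ S : Matrix n n K, S.det ≠ 0 ∧ A = B * S * Bᵀ := by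
  obtain ⟨L, hLB⟩ :=
    exists_mul_eq_one_of_rank_eq_card (B := B) (by rw [rank, hBA, ← hrank, rank])
  have hBLA : B * L * A = A := mul_mul_eq_self_of_range_le hLB hBA.ge
  have hALB : A * Lᵀ * Bᵀ = A := by
    rw [Matrix.mul_assoc, ← transpose_mul, ← hA.eq, ← transpose_mul, hBLA]
  have hAS : A = B * (L * A * Lᵀ) * Bᵀ :=
    calc A = B * L * (A * Lᵀ * Bᵀ) := by rw [hALB, hBLA]
      _ = B * (L * A * Lᵀ) * Bᵀ := by simp only [Matrix.mul_assoc]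
  refine ⟨L * A * Lᵀ,
    det_ne_zero_of_rank_eq_card (le_antisymm (rank_le_card_width _) ?_), hAS⟩
  calc Fintype.card n = (B * (L * A * Lᵀ) * Bᵀ).rank := by rw [← hAS, hrank]
    _ ≤ (L * A * Lᵀ).rank := (rank_mul_le_left _ _).trans (rank_mul_le_right _ _)

end Field

end Matrix

namespace Submodule

variable {K : Type*} [Field K] {m : ℕ}

theorem exists_isLeadingEntry {V : Submodule K (Fin m → K)} (hV : V ≠ ⊥) :
    ∃ c : Fin m, ∃ v ∈ V, v c ≠ 0 ∧ ∀ w ∈ V, ∀ j < c, w j = 0 := by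
  obtain ⟨v, hvV, hv⟩ := exists_mem_ne_zero_of_ne_bot hV
  obtain ⟨c, ⟨w, hwV, hwc⟩, hmin⟩ :=
    wellFounded_lt.has_min {k : Fin m | ∃ w ∈ V, w k ≠ 0}
      ((Function.ne_iff.mp hv).imp fun k hk => ⟨v, hvV, hk⟩)
  exact ⟨c, w, hwV, hwc, fun w' hw' j hj => by_contra fun h => hmin j ⟨w', hw', h⟩ hj⟩

theorem span_singleton_sup_inf_ker_proj {V : Submodule K (Fin m → K)} {v : Fin m → K}
    (hv : v ∈ V) {c : Fin m} (hvc : v c ≠ 0) :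
    span K {v} ⊔ (V ⊓ LinearMap.ker (LinearMap.proj c)) = V := by
  refine le_antisymm (sup_le ((span_singleton_le_iff_mem _ _).mpr hv) inf_le_left) fun w hw => ?_
  have hw' : w - (w c / v c) • v ∈ V ⊓ LinearMap.ker (LinearMap.proj c) :=
    ⟨V.sub_mem hw (V.smul_mem _ hv), by simp [div_mul_cancel₀ _ hvc]⟩
  exact mem_sup.mpr ⟨_, mem_span_singleton.mpr ⟨w c / v c, rfl⟩, _, hw', add_sub_cancel _ _⟩

theorem finrank_inf_ker_proj_add_one {V : Submodule K (Fin m → K)} {v : Fin m → K}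
    (hv : v ∈ V) {c : Fin m} (hvc : v c ≠ 0) :
    finrank K ↥(V ⊓ LinearMap.ker (LinearMap.proj c)) + 1 = finrank K V := by
  have hdisj : span K {v} ⊓ (V ⊓ LinearMap.ker (LinearMap.proj c)) = ⊥ := by
    refine eq_bot_iff.mpr fun x ⟨hx, _, hxc⟩ => ?_
    obtain ⟨a, rfl⟩ := mem_span_singleton.mp hx
    have : a * v c = 0 := hxc
    simp [(mul_eq_zero.mp this).resolve_right hvc]
  have := finrank_sup_add_finrank_inf_eq (span K {v}) (V ⊓ LinearMap.ker (LinearMap.proj c))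
  rw [span_singleton_sup_inf_ker_proj hv hvc, hdisj, finrank_bot,
    finrank_span_singleton (fun h => hvc (by simp [h]))] at this
  omega

theorem exists_isLeadingEntry_row_span_eq : ∀ (r : ℕ) (V : Submodule K (Fin m → K)),
    finrank K V = r → ∃ (U : Matrix (Fin r) (Fin m) K) (p : Fin r → Fin m),
      Function.Injective p ∧ (∀ i, U.IsLeadingEntry i (p i)) ∧ span K (Set.range U.row) = V
  | 0, V, hV => ⟨0, Fin.elim0, fun i => i.elim0, fun i => i.elim0, by
      simp [Set.range_eq_empty, (finrank_eq_zero.mp hV).symm]⟩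
  | r + 1, V, hV => by
    obtain ⟨c, v, hvV, hvc, hlow⟩ :=
      exists_isLeadingEntry (V := V) fun h => by subst h; simp at hV
    obtain ⟨U, p, hp, hU, hspan⟩ := exists_isLeadingEntry_row_span_eq r
      (V ⊓ LinearMap.ker (LinearMap.proj c))
      (by have := finrank_inf_ker_proj_add_one hvV hvc; omega)
    have hUc : ∀ i, U i c = 0 := fun i =>
      (hspan ▸ subset_span ⟨i, rfl⟩ : U.row i ∈ V ⊓ LinearMap.ker (LinearMap.proj c)).2
    refine ⟨vecCons v U, Fin.cons c p, ?_, ?_, ?_⟩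
    · exact Fin.cons_injective_iff.mpr ⟨fun ⟨i, hi⟩ => (hU i).2 (hi ▸ hUc i), hp⟩
    · exact Fin.cases ⟨fun j hj => hlow v hvV j hj, hvc⟩ hU
    · change span K (Set.range (vecCons v U.row)) = V
      rw [range_cons, Set.singleton_union, span_insert, hspan,
        span_singleton_sup_inf_ker_proj hvV hvc]

end Submodule

theorem rank_eq_sub_rootMultiplicity_mulmuley_general {m : ℕ}
    (A : Matrix (Fin m) (Fin m) ℂ) (hA : A.IsSymm) :
    A.rank = m - (mulmuleyPoly A).rootMultiplicity 0 := by
  obtain ⟨r, hr⟩ : ∃ r, A.rank = r := ⟨_, rfl⟩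
  obtain ⟨U, p, hp, hU, hspan⟩ :=
    Submodule.exists_isLeadingEntry_row_span_eq r (LinearMap.range A.mulVecLin) hr
  obtain ⟨S, hS, hAS⟩ := hA.exists_det_ne_zero_eq_mul_mul_transpose (B := Uᵀ)
    (by rw [range_mulVecLin, col_transpose, hspan]) (hr.trans (Fintype.card_fin r).symm)
  set D := diagonal fun k : Fin m => (X : ℂ[X]) ^ (k : ℕ)
  have hfactor : mulmuleyPoly A = ((D * (U.map C)ᵀ) * (S.map C * U.map C)).charpoly := by
    rw [mulmuleyPoly, hAS, transpose_transpose, Matrix.map_mul, Matrix.map_mul, transpose_map]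
    simp only [Matrix.mul_assoc]
    rfl
  have hdet : ((S.map C * U.map C) * (D * (U.map C)ᵀ)).det ≠ 0 := by
    rw [Matrix.mul_assoc, ← Matrix.mul_assoc (U.map C), det_mul, ← RingHom.mapMatrix_apply,
      ← RingHom.map_det]
    exact mul_ne_zero (C_ne_zero.mpr hS) (det_weightedGram_ne_zero U hp hU)
  have hrm : r ≤ m := hr ▸ A.rank_le_width
  rw [hfactor, rootMultiplicity_zero_charpoly_mul _ _ (by simpa using hrm) hdet,
    Fintype.card_fin, Fintype.card_fin, hr]
  omega

/-- **Mulmuley's rank theorem** (symmetric case): for a symmetric `m × m`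
matrix `A` over `ℂ` with `m ≥ 1`, if `s` is the multiplicity of `0` as a root
of the Mulmuley polynomial of `A` (i.e. the largest `s` with `Z^s ∣ p_A(Z)`),
then `rank A = m − s`. -/
theorem rank_eq_sub_rootMultiplicity_mulmuley {m : ℕ} (hm : 1 ≤ m)
    (A : Matrix (Fin m) (Fin m) ℂ) (hA : A.IsSymm) :
    A.rank = m - (mulmuleyPoly A).rootMultiplicity 0 :=
  rank_eq_sub_rootMultiplicity_mulmuley_general A hA
end

section
/- Let A be an m×m′ matrix over ℂ, set N := m + m′, and let B be the symmetric N×N block matrix [[0, A],[Aᵀ, 0]]. Let p_B(Z) ∈ (ℂ[T])[Z] be the Mulmuley polynomial of B and let s be the multiplicity of 0 as a root of p_B(Z). Then N − s = 2·(rank of A); in particular N − s is even and rank A = (N − s)/2. (This is the rank-computation pipeline of Section 2.7 of the paper, combining the symmetrization step with Mulmuley's theorem.) -/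
open Matrix

/-!
Over `F = K(T)` the matrix `M = X·B` has `ker M² = ker M`, since `X` is invertible and
`B X B v = 0` forces `B v = 0`: clear denominators so that `w = B v` has polynomial entries,
let `e` be the least order of vanishing of the entries of `w` and `z = B y` its coefficient
vector in degree `e`. Symmetry of `B` gives `∑ᵢ zᵢ Tⁱ wᵢ = yᵀ B X B v = 0`, while the
coefficient of `T^(j+e)` in that sum, for `j` the first index with `z_j ≠ 0`, is `z_j²`.
Hence `w = 0`, so `0` is a semisimple eigenvalue of `M` and its multiplicity in the
characteristic polynomial is `N - rank M = N - rank B`.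
For `B = [[0, A], [Aᵀ, 0]]` the rank of `B` is `2 · rank A`.
-/

open Polynomial

namespace Matrix

section Rank

variable {K : Type*} [Field K]

theorem rank_fromBlocks_zero_zero {m n p q : Type*} [Fintype m] [Fintype n] [Fintype p]
    [Fintype q] [DecidableEq n] [DecidableEq q] (A : Matrix m n K) (D : Matrix p q K) :
    (fromBlocks A 0 0 D).rank = A.rank + D.rank := by
  let f := toLin' A
  let g := toLin' D
  have hblocks : fromBlocks A 0 0 D = LinearMap.toMatrix
      ((Pi.basisFun K n).prod (Pi.basisFun K q)) ((Pi.basisFun K m).prod (Pi.basisFun K p))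
      (f.prodMap g) := by
    ext (i | i) (j | j) <;> simp [f, g, LinearMap.toMatrix_apply]
  let e : (f.range.prod g.range) ≃ₗ[K] f.range × g.range :=
    { toFun x := (⟨x.1.1, x.2.1⟩, ⟨x.1.2, x.2.2⟩)
      invFun y := ⟨(y.1, y.2), y.1.2, y.2.2⟩
      map_add' _ _ := rfl
      map_smul' _ _ := rfl }
  rw [hblocks, rank_eq_finrank_range_toLin _ ((Pi.basisFun K m).prod (Pi.basisFun K p))
    ((Pi.basisFun K n).prod (Pi.basisFun K q)), toLin_toMatrix, LinearMap.range_prodMap,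
    e.finrank_eq, Module.finrank_prod]
  rfl

theorem rank_fromBlocks_zero_transpose_zero {m n : Type*} [Fintype m] [Fintype n]
    [DecidableEq m] [DecidableEq n] (A : Matrix m n K) :
    (fromBlocks (0 : Matrix m m K) A Aᵀ (0 : Matrix n n K)).rank = 2 * A.rank := by
  have hswap : fromBlocks (0 : Matrix m m K) A Aᵀ 0 =
      (fromBlocks A 0 0 Aᵀ).submatrix (Equiv.refl _) (Equiv.sumComm m n) := by
    ext (i | i) (j | j) <;> rfl
  rw [hswap, rank_submatrix, rank_fromBlocks_zero_zero, rank_transpose, two_mul]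

theorem rank_map {L : Type*} [Field L] {n : Type*} [Fintype n] [DecidableEq n]
    (f : K →+* L) (M : Matrix n n K) : (M.map f).rank = M.rank := by
  obtain ⟨V, U, e, hV, hU, hM⟩ := M.exists_rank_normal_form
  have hMf : V.map f * M.map f * U.map f = (fromBlocks 1 0 0 0).submatrix e e := by
    rw [← Matrix.map_mul, ← Matrix.map_mul, hM, ← submatrix_map, fromBlocks_map]
    simp
  have hVf : IsUnit (V.map f).det := (isUnit_iff_isUnit_det _).mp (hV.map f.mapMatrix)
  have hUf : IsUnit (U.map f).det := (isUnit_iff_isUnit_det _).mp (hU.map f.mapMatrix)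
  rw [← rank_mul_eq_right_of_isUnit_det _ _ hVf, ← rank_mul_eq_left_of_isUnit_det _ _ hUf, hMf,
    rank_submatrix, rank_fromBlocks_zero_zero, rank_one, rank_zero, Fintype.card_fin, add_zero]

end Rank

theorem mulVec_map_algebraMap_eq_zero_of_imp {R F : Type*} [CommRing R] [IsDomain R]
    [Field F] [Algebra R F] [IsFractionRing R F] {m n ι : Type*} [Fintype ι]
    {M : Matrix m ι R} {M' : Matrix n ι R} (h : ∀ p, M *ᵥ p = 0 → M' *ᵥ p = 0)
    {v : ι → F} (hv : M.map (algebraMap R F) *ᵥ v = 0) :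
    M'.map (algebraMap R F) *ᵥ v = 0 := by
  obtain ⟨b, hb⟩ := IsLocalization.exist_integer_multiples_of_finite (nonZeroDivisors R) v
  choose p hp using hb
  have hpv : (b : R) • v = algebraMap R F ∘ p := funext fun i => (hp i).symm
  have hMp : M *ᵥ p = 0 := by
    funext i
    apply IsFractionRing.injective R F
    rw [RingHom.map_mulVec, ← hpv, mulVec_smul, hv, smul_zero, Pi.zero_apply, Pi.zero_apply,
      map_zero]
  have hbv : (b : R) • (M'.map (algebraMap R F) *ᵥ v) = 0 := by
    funext i
    rw [← mulVec_smul, hpv, ← RingHom.map_mulVec, h p hMp, Pi.zero_apply, map_zero,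
      Pi.zero_apply]
  exact (smul_eq_zero.mp hbv).resolve_left (nonZeroDivisors.coe_ne_zero b)

end Matrix

theorem Module.End.natTrailingDegree_charpoly_eq_finrank_ker {K V : Type*} [Field K]
    [AddCommGroup V] [Module K V] [FiniteDimensional K V] (φ : Module.End K V)
    (h : LinearMap.ker (φ ^ 2) ≤ LinearMap.ker φ) :
    φ.charpoly.natTrailingDegree = Module.finrank K (LinearMap.ker φ) := by
  have hstab := Module.End.ker_pow_constant (f := φ) (k := 1)
    (le_antisymm (LinearMap.ker_le_ker_comp _ _) (by simpa using h))
  suffices hmax : φ.maxGenEigenspace 0 = LinearMap.ker φ by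
    rw [← LinearMap.finrank_maxGenEigenspace_zero_eq, hmax]
  rw [← Module.End.iSup_genEigenspace_eq]
  refine le_antisymm (iSup_le fun k => ?_) (le_iSup_of_le 1 ?_) <;>
    rw [Module.End.genEigenspace_nat, zero_smul, sub_zero]
  · rcases k with _ | k
    · rw [pow_zero, Module.End.one_eq_id, LinearMap.ker_id]
      exact bot_le
    · rw [add_comm, ← hstab, pow_one]
  · rw [pow_one]

theorem Matrix.rootMultiplicity_zero_charpoly_add_rank {K : Type*} [Field K] {n : Type*}
    [Fintype n] [DecidableEq n] (M : Matrix n n K)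
    (h : ∀ v, M *ᵥ (M *ᵥ v) = 0 → M *ᵥ v = 0) :
    M.charpoly.rootMultiplicity 0 + M.rank = Fintype.card n := by
  have hrank := LinearMap.finrank_range_add_finrank_ker (toLin' M)
  rw [Module.finrank_fintype_fun_eq_card] at hrank
  rw [rootMultiplicity_eq_natTrailingDegree', ← charpoly_toLin',
    Module.End.natTrailingDegree_charpoly_eq_finrank_ker, add_comm, ← hrank]
  · rfl
  · intro v hv
    simpa [pow_two, mulVec_mulVec] using h v (by simpa [pow_two, mulVec_mulVec] using hv)

namespace Polynomial

variable {R : Type*}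

theorem exists_order_of_ne_zero [Semiring R] {ι : Type*} {w : ι → R[X]} (hw : w ≠ 0) :
    ∃ e, (∀ i, ∀ d < e, (w i).coeff d = 0) ∧ ∃ i, (w i).coeff e ≠ 0 := by
  classical
  have hex : ∃ e, ∃ i, (w i).coeff e ≠ 0 := by
    obtain ⟨i, hi⟩ := Function.ne_iff.mp hw
    exact ⟨_, i, leadingCoeff_ne_zero.mpr hi⟩
  refine ⟨Nat.find hex, fun i d hd => ?_, Nat.find_spec hex⟩
  by_contra h
  exact Nat.find_min hex hd ⟨i, h⟩

theorem coeff_eq_zero_of_sum_C_coeff_mul_X_pow_mul_eq_zero [CommRing R] [NoZeroDivisors R]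
    {N : ℕ} {w : Fin N → R[X]} {e : ℕ} (hw : ∀ i, ∀ d < e, (w i).coeff d = 0)
    (h : ∑ i, C ((w i).coeff e) * X ^ (i : ℕ) * w i = 0) (i : Fin N) : (w i).coeff e = 0 := by
  classical
  by_contra hi
  obtain ⟨j, hj, hmin⟩ := Finset.exists_min_image
    (Finset.univ.filter fun i => (w i).coeff e ≠ 0) id ⟨i, by simpa using hi⟩
  have hj : (w j).coeff e ≠ 0 := by simpa using hj
  have hterm (k : Fin N) : (C ((w k).coeff e) * X ^ (k : ℕ) * w k).coeff (j + e) =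
      if (k : ℕ) ≤ j + e then (w k).coeff e * (w k).coeff (j + e - k) else 0 := by
    rw [mul_assoc, coeff_C_mul, coeff_X_pow_mul', mul_ite, mul_zero]
  -- The coefficient of `X ^ (j + e)` is `(w j).coeff e ^ 2`: terms with `k < j` have a zero
  -- factor `(w k).coeff e`, terms with `k > j` read a coefficient of `w k` below its order `e`.
  have hcoeff := congrArg (coeff · (j + e)) h
  simp only [finsetSum_coeff, hterm, coeff_zero] at hcoeff
  rw [Finset.sum_eq_single j, if_pos (Nat.le_add_right _ _), Nat.add_sub_cancel_left] at hcoeff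
  · exact hj (mul_self_eq_zero.mp hcoeff)
  · intro k _ hkj
    by_cases hk : (w k).coeff e = 0
    · simp [hk]
    · have hjk : (j : ℕ) < k :=
        lt_of_le_of_ne (hmin k (by simpa using hk)) (Fin.val_ne_of_ne hkj.symm)
      split_ifs with hle
      · rw [hw k (j + e - k) (by omega), mul_zero]
      · rfl
  · simp

theorem coeff_mulVec_map_C [Semiring R] {m n : Type*} [Fintype n] (B : Matrix m n R)
    (p : n → R[X]) (e : ℕ) (i : m) :
    ((B.map C *ᵥ p) i).coeff e = (B *ᵥ fun j => (p j).coeff e) i := by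
  simp [mulVec, dotProduct, finsetSum_coeff, coeff_C_mul]

end Polynomial

namespace Matrix.IsSymm

variable {R : Type*} [CommRing R] {N : ℕ}

theorem mulVec_eq_zero_of_mul_diagonal_X_pow_mul_mulVec_eq_zero [NoZeroDivisors R]
    {B : Matrix (Fin N) (Fin N) R} (hB : B.IsSymm) {p : Fin N → R[X]}
    (h : (B.map C * diagonal (fun i : Fin N => X ^ (i : ℕ)) * B.map C) *ᵥ p = 0) :
    B.map C *ᵥ p = 0 := by
  set w := B.map C *ᵥ p
  by_contra hw
  obtain ⟨e, hlow, i, hi⟩ := exists_order_of_ne_zero hw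
  have hz : (fun i => C ((w i).coeff e)) = B.map C *ᵥ fun j => C ((p j).coeff e) := by
    funext i
    rw [coeff_mulVec_map_C]
    exact RingHom.map_mulVec C B _ i
  have hBC : (B.map C)ᵀ = B.map C := by rw [← transpose_map, hB.eq]
  refine hi (coeff_eq_zero_of_sum_C_coeff_mul_X_pow_mul_eq_zero hlow ?_ i)
  calc ∑ i, C ((w i).coeff e) * X ^ (i : ℕ) * w i
      = (fun i => C ((w i).coeff e)) ⬝ᵥ (diagonal (fun i : Fin N => X ^ (i : ℕ)) *ᵥ w) := by
        simp only [dotProduct, mulVec_diagonal, mul_assoc]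
    _ = (fun j => C ((p j).coeff e)) ⬝ᵥ
          (B.map C *ᵥ (diagonal (fun i : Fin N => X ^ (i : ℕ)) *ᵥ w)) := by
        rw [hz, dotProduct_comm, dotProduct_mulVec, ← mulVec_transpose, hBC, dotProduct_comm]
    _ = (fun j => C ((p j).coeff e)) ⬝ᵥ
          ((B.map C * diagonal (fun i : Fin N => X ^ (i : ℕ)) * B.map C) *ᵥ p) := by
        simp only [w, mulVec_mulVec, Matrix.mul_assoc]
    _ = 0 := by rw [h, dotProduct_zero]

theorem rootMultiplicity_zero_charpoly_diagonal_X_pow_mul_add_rank {K : Type*} [Field K]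
    {B : Matrix (Fin N) (Fin N) K} (hB : B.IsSymm) :
    ((diagonal fun i : Fin N => (X : K[X]) ^ (i : ℕ)) * B.map C).charpoly.rootMultiplicity 0 +
      B.rank = N := by
  let F := FractionRing K[X]
  set D : Matrix (Fin N) (Fin N) K[X] := diagonal fun i => X ^ (i : ℕ)
  rw [eq_rootMultiplicity_map (IsFractionRing.injective K[X] F) 0, map_zero, ← charpoly_map,
    Matrix.map_mul]
  set Df := D.map (algebraMap K[X] F)
  set Bf := (B.map C).map (algebraMap K[X] F)
  have hD : IsUnit Df.det := by
    rw [show Df.det = algebraMap K[X] F D.det from (RingHom.map_det _ D).symm, det_diagonal,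
      isUnit_iff_ne_zero]
    exact IsFractionRing.to_map_ne_zero_of_mem_nonZeroDivisors <| mem_nonZeroDivisors_of_ne_zero <|
      Finset.prod_ne_zero_iff.mpr fun i _ => pow_ne_zero _ X_ne_zero
  have hBf : Bf.rank = B.rank := by
    simp only [Bf, Matrix.map_map, ← RingHom.coe_comp, rank_map]
  rw [← hBf, ← rank_mul_eq_right_of_isUnit_det _ _ hD]
  refine (rootMultiplicity_zero_charpoly_add_rank _ fun v hv => ?_).trans (Fintype.card_fin N)
  have hBDB : (Bf * Df * Bf) *ᵥ v = 0 := by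
    apply mulVec_injective_iff_isUnit.mpr ((isUnit_iff_isUnit_det _).mpr hD)
    rw [mulVec_mulVec, mulVec_zero, ← hv, mulVec_mulVec]
    simp only [Matrix.mul_assoc]
  have hBv : Bf *ᵥ v = 0 := mulVec_map_algebraMap_eq_zero_of_imp
    (fun _ => hB.mulVec_eq_zero_of_mul_diagonal_X_pow_mul_mulVec_eq_zero)
    (by rwa [Matrix.map_mul, Matrix.map_mul])
  rw [← mulVec_mulVec, hBv, mulVec_zero]

end Matrix.IsSymm

/-- The rank-computation pipeline: for an `m × m′` matrix `A` over `ℂ`,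
let `N := m + m′` and let `B` be the symmetric `N × N` block matrix
`[[0, A],[Aᵀ, 0]]`. If `s` is the multiplicity of `0` as a root of the Mulmuley
polynomial of `B`, then `N − s = 2 · rank A`; in particular `N − s` is even and
`rank A = (N − s)/2`. -/
theorem rank_via_mulmuley_of_symmetrized {m m' : ℕ} (A : Matrix (Fin m) (Fin m') ℂ) :
    ∀ s : ℕ,
      s = (mulmuleyPoly
            ((Matrix.reindex finSumFinEquiv finSumFinEquiv)
              (Matrix.fromBlocks (0 : Matrix (Fin m) (Fin m) ℂ) A
                Aᵀ (0 : Matrix (Fin m') (Fin m') ℂ)))).rootMultiplicity 0 →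
      m + m' - s = 2 * A.rank ∧ Even (m + m' - s) ∧ A.rank = (m + m' - s) / 2 := by
  intro s hs
  have hsymm : (Matrix.reindex finSumFinEquiv finSumFinEquiv
      (fromBlocks (0 : Matrix (Fin m) (Fin m) ℂ) A Aᵀ 0)).IsSymm :=
    (isSymm_zero.fromBlocks rfl isSymm_zero).reindex _
  have hcount := hsymm.rootMultiplicity_zero_charpoly_diagonal_X_pow_mul_add_rank
  rw [← mulmuleyPoly, ← hs, rank_reindex, rank_fromBlocks_zero_transpose_zero] at hcount
  exact ⟨by omega, ⟨A.rank, by omega⟩, by omega⟩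
end

section
/- Let A be a symmetric N×N matrix over ℂ, let p_A(Z) ∈ (ℂ[T])[Z] be its Mulmuley polynomial, and let 0 ≤ k ≤ N. Then Z^k divides p_A(Z) if and only if the kernel of A has dimension at least k. (This equivalence is the criterion used in the correctness proofs of the paper's Smoothness Test (Proposition 6.1) and of the construction of generic hyperplanes (Proposition 7.2): the nullity of a Jacobian-type matrix exceeds a threshold exactly when the corresponding low-order coefficients of the Mulmuley polynomial vanish.) -/
open Polynomial Matrix Module Submodule Function Finset

def Matrix.IsTrailingEntry {m n R : Type*} [LT n] [Zero R] (A : Matrix m n R) (i : m) (c : n) :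
    Prop :=
  A i c ≠ 0 ∧ ∀ c', c < c' → A i c' = 0

section Echelon

variable {K V : Type*} [Field K] [AddCommGroup V] [Module K V]

theorem Submodule.span_singleton_sup_ker_inf {W : Submodule K V} (f : V →ₗ[K] K) {w : V}
    (hw : w ∈ W) (hfw : f w ≠ 0) : K ∙ w ⊔ LinearMap.ker f ⊓ W = W := by
  rw [← sup_inf_assoc_of_le _ ((span_singleton_le_iff_mem _ _).2 hw),
    LinearMap.span_singleton_sup_ker_eq_top f hfw, top_inf_eq]

theorem Submodule.finrank_ker_inf_add_one [FiniteDimensional K V] {W : Submodule K V}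
    (f : V →ₗ[K] K) {w : V} (hw : w ∈ W) (hfw : f w ≠ 0) :
    finrank K ↥(LinearMap.ker f ⊓ W) + 1 = finrank K W := by
  have hdisj : Disjoint (LinearMap.ker f ⊓ W) (K ∙ w) :=
    disjoint_span_singleton.2 fun h => absurd (LinearMap.mem_ker.1 (mem_inf.1 h).1) hfw
  have := finrank_sup_add_finrank_inf_eq (K ∙ w) (LinearMap.ker f ⊓ W)
  rw [span_singleton_sup_ker_inf f hw hfw, hdisj.symm.eq_bot, finrank_bot,
    finrank_span_singleton (by rintro rfl; exact hfw (map_zero f))] at this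
  omega

variable {ι : Type*} [Fintype ι] [LinearOrder ι]

theorem Submodule.exists_last_ne_zero {W : Submodule K (ι → K)} (hW : W ≠ ⊥) :
    ∃ j, (∃ w ∈ W, w j ≠ 0) ∧ ∀ v ∈ W, ∀ i, j < i → v i = 0 := by
  classical
  obtain ⟨v, hv, hv0⟩ := exists_mem_ne_zero_of_ne_bot hW
  obtain ⟨i, hi⟩ := Function.ne_iff.1 hv0
  obtain ⟨j, hj, hmax⟩ := (univ.filter fun j => ∃ w ∈ W, w j ≠ 0).exists_max_image id
    ⟨i, mem_filter.2 ⟨mem_univ _, v, hv, hi⟩⟩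
  refine ⟨j, (mem_filter.1 hj).2, fun v hv i hji => ?_⟩
  by_contra h
  exact (hmax i (mem_filter.2 ⟨mem_univ _, v, hv, h⟩)).not_gt hji

theorem Submodule.exists_isTrailingEntry_span_row_eq (r : ℕ) (W : Submodule K (ι → K))
    (hr : finrank K W = r) :
    ∃ (Q : Matrix (Fin r) ι K) (t : Fin r → ι), Injective t ∧
      (∀ a, Q.IsTrailingEntry a (t a)) ∧ span K (Set.range Q.row) = W := by
  induction r generalizing W with
  | zero =>
    refine ⟨0, finZeroElim, injective_of_subsingleton _, finZeroElim, ?_⟩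
    rw [Set.range_eq_empty, span_empty, eq_comm, ← finrank_eq_zero, hr]
  | succ r ih =>
    obtain ⟨j, ⟨w, hw, hwj⟩, hlast⟩ :=
      exists_last_ne_zero (W := W) (by rintro rfl; simp at hr)
    let f : (ι → K) →ₗ[K] K := LinearMap.proj j
    obtain ⟨Q, t, ht, hQ, hspan⟩ := ih (LinearMap.ker f ⊓ W) (by
      have := finrank_ker_inf_add_one f hw hwj
      omega)
    have hQj : ∀ a, Q a j = 0 := fun a =>
      (mem_inf.1 (hspan ▸ subset_span ⟨a, rfl⟩ : Q a ∈ LinearMap.ker f ⊓ W)).1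
    refine ⟨Matrix.of (Fin.cons w Q.row), Fin.cons j t, ?_, ?_, ?_⟩
    · exact Fin.cons_injective_iff.2 ⟨by rintro ⟨a, rfl⟩; exact (hQ a).1 (hQj a), ht⟩
    · intro a
      cases a using Fin.cases with
      | zero => exact ⟨hwj, hlast w hw⟩
      | succ a => exact hQ a
    · change span K (Set.range (Fin.cons w Q.row)) = W
      rw [Fin.range_cons, span_insert, hspan, span_singleton_sup_ker_inf f hw hwj]

end Echelon

theorem Polynomial.coeff_prod_sum_of_natDegree_le {ι R : Type*} [CommSemiring R] (s : Finset ι)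
    (f : ι → R[X]) (d : ι → ℕ) (h : ∀ i ∈ s, (f i).natDegree ≤ d i) :
    (∏ i ∈ s, f i).coeff (∑ i ∈ s, d i) = ∏ i ∈ s, (f i).coeff (d i) := by
  classical
  induction s using Finset.induction_on with
  | empty => simp
  | insert a s ha ih =>
    have hs : ∀ i ∈ s, (f i).natDegree ≤ d i := fun i hi => h i (mem_insert_of_mem hi)
    rw [prod_insert ha, sum_insert ha, prod_insert ha,
      coeff_mul_add_eq_of_natDegree_le (h a (mem_insert_self a s))
        ((natDegree_prod_le _ _).trans (sum_le_sum hs)), ih hs]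

theorem Equiv.Perm.sum_min_lt_sum {n : Type*} [Fintype n] {σ : Equiv.Perm n} (hσ : σ ≠ 1)
    {t : n → ℕ} (ht : Injective t) : ∑ a, min (t (σ a)) (t a) < ∑ a, t a := by
  obtain ⟨a, ha⟩ : ∃ a, t (σ a) < t a := by
    by_contra! hle
    have heq := (sum_eq_sum_iff_of_le fun a _ => hle a).1 (Equiv.sum_comp σ t).symm
    exact hσ (Equiv.ext fun a => ht (heq a (mem_univ a)).symm)
  exact sum_lt_sum (fun b _ => min_le_right _ _) ⟨a, mem_univ a, (min_le_left _ _).trans_lt ha⟩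

theorem Matrix.coeff_det_of_natDegree_le_min {n R : Type*} [Fintype n] [DecidableEq n]
    [CommRing R] (M : Matrix n n R[X]) {t : n → ℕ} (ht : Injective t)
    (hM : ∀ a b, (M a b).natDegree ≤ min (t a) (t b)) :
    M.det.coeff (∑ a, t a) = ∏ a, (M a a).coeff (t a) := by
  rw [det_apply', finsetSum_coeff, sum_eq_single 1]
  · simpa using coeff_prod_sum_of_natDegree_le univ (fun a => M a a) t
      fun a _ => (hM a a).trans (min_le_left _ _)
  · intro σ _ hσ
    rw [← C_eq_intCast, coeff_C_mul, coeff_eq_zero_of_natDegree_lt, mul_zero]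
    calc (∏ a, M (σ a) a).natDegree ≤ ∑ a, (M (σ a) a).natDegree := natDegree_prod_le _ _
      _ ≤ ∑ a, min (t (σ a)) (t a) := sum_le_sum fun a _ => hM (σ a) a
      _ < ∑ a, t a := Equiv.Perm.sum_min_lt_sum hσ ht
  · simp

section Gram

variable {R : Type*} [CommRing R] {r N : ℕ}

theorem Polynomial.coeff_sum_C_mul_X_pow_val (c : Fin N → R) (j : Fin N) :
    (∑ i : Fin N, C (c i) * X ^ (i : ℕ)).coeff j = c j := by
  simp [finsetSum_coeff, Fin.val_inj]

theorem Matrix.map_C_mul_diagonal_X_pow_mul_transpose_apply (Q : Matrix (Fin r) (Fin N) R)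
    (a b : Fin r) :
    (Q.map C * diagonal (fun i : Fin N => (X : R[X]) ^ (i : ℕ)) * (Q.map C)ᵀ) a b =
      ∑ i, C (Q a i * Q b i) * X ^ (i : ℕ) := by
  rw [mul_apply]
  simp only [mul_diagonal, map_apply, transpose_apply, C_mul]
  exact sum_congr rfl fun i _ => by ring

theorem Matrix.det_map_C_mul_diagonal_X_pow_mul_transpose_ne_zero [IsDomain R]
    (Q : Matrix (Fin r) (Fin N) R) {t : Fin r → Fin N} (ht : Injective t)
    (hQ : ∀ a, Q.IsTrailingEntry a (t a)) :
    (Q.map C * diagonal (fun i : Fin N => (X : R[X]) ^ (i : ℕ)) * (Q.map C)ᵀ).det ≠ 0 := by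
  have hle : ∀ a i, Q a i ≠ 0 → (i : ℕ) ≤ t a := fun a i h =>
    Fin.le_def.1 (not_lt.1 fun hlt => h ((hQ a).2 i hlt))
  have hdeg : ∀ a b, ((Q.map C * diagonal (fun i : Fin N => (X : R[X]) ^ (i : ℕ)) *
      (Q.map C)ᵀ) a b).natDegree ≤ min (t a : ℕ) (t b) := fun a b => by
    rw [map_C_mul_diagonal_X_pow_mul_transpose_apply]
    refine natDegree_sum_le_of_forall_le _ _ fun i _ => ?_
    by_cases h : Q a i * Q b i = 0
    · simp [h]
    · exact (natDegree_C_mul_X_pow_le _ _).trans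
        (le_min (hle a i (left_ne_zero_of_mul h)) (hle b i (right_ne_zero_of_mul h)))
  intro h
  have hcoeff := coeff_det_of_natDegree_le_min _
    (t := fun a => (t a : ℕ)) (Fin.val_injective.comp ht) hdeg
  simp only [h, coeff_zero, map_C_mul_diagonal_X_pow_mul_transpose_apply,
    coeff_sum_C_mul_X_pow_val] at hcoeff
  exact prod_ne_zero_iff.2 (fun a _ => mul_ne_zero (hQ a).1 (hQ a).1) hcoeff.symm

end Gram

theorem Matrix.exists_eq_mul_of_span_row_le {l m n R : Type*} [Fintype m] [CommSemiring R]
    (A : Matrix l n R) (Q : Matrix m n R)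
    (h : span R (Set.range A.row) ≤ span R (Set.range Q.row)) :
    ∃ B : Matrix l m R, A = B * Q := by
  choose c hc using fun i => (mem_span_range_iff_exists_fun R).1 (h (subset_span ⟨i, rfl⟩))
  refine ⟨Matrix.of c, ?_⟩
  ext i j
  simpa [mul_apply, Matrix.row] using (congrFun (hc i) j).symm

theorem Matrix.IsSymm.transpose_eq_mul {l m R : Type*} [Fintype l] [Fintype m] [CommSemiring R]
    {A : Matrix l l R} (hA : A.IsSymm) {B : Matrix l m R} {Q P : Matrix m l R}
    (hB : A = B * Q) (hP : Q = P * A) : Qᵀ = B * (Q * Pᵀ) := by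
  conv_lhs => rw [hP, transpose_mul, hA.eq, hB]
  rw [Matrix.mul_assoc]

theorem Polynomial.X_pow_dvd_X_pow_mul_iff {R : Type*} [CommSemiring R] {q : R[X]}
    (hq : q.coeff 0 ≠ 0) {k m : ℕ} : X ^ k ∣ X ^ m * q ↔ k ≤ m := by
  refine ⟨fun h => ?_, fun h => (pow_dvd_pow X h).mul_right q⟩
  by_contra! hlt
  exact hq (by simpa [coeff_X_pow_mul'] using X_pow_dvd_iff.1 h m hlt)

theorem mulmuleyPoly_eq_X_pow_mul {r N : ℕ} {A : Matrix (Fin N) (Fin N) ℂ}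
    {B : Matrix (Fin N) (Fin r) ℂ} {Q : Matrix (Fin r) (Fin N) ℂ} (hA : A = B * Q)
    (hr : r ≤ N) :
    mulmuleyPoly A = X ^ (N - r) *
      (Q.map C * diagonal (fun i : Fin N => (X : ℂ[X]) ^ (i : ℕ)) * B.map C).charpoly := by
  rw [mulmuleyPoly, hA, Matrix.map_mul, ← Matrix.mul_assoc,
    charpoly_mul_comm_of_le _ _ (by simpa using hr), Fintype.card_fin, Fintype.card_fin,
    Matrix.mul_assoc]

theorem pow_dvd_mulmuley_iff_le_finrank_ker_general {N : ℕ} (A : Matrix (Fin N) (Fin N) ℂ)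
    (hA : A.IsSymm) (k : ℕ) :
    (Polynomial.X ^ k ∣ mulmuleyPoly A) ↔
      k ≤ Module.finrank ℂ (LinearMap.ker A.mulVecLin) := by
  obtain ⟨Q, t, ht, hQ, hspan⟩ := exists_isTrailingEntry_span_row_eq A.rank _
    A.rank_eq_finrank_span_row.symm
  obtain ⟨B, hB⟩ := exists_eq_mul_of_span_row_le A Q hspan.ge
  obtain ⟨P, hP⟩ := exists_eq_mul_of_span_row_le Q A hspan.le
  set D := diagonal fun i : Fin N => (X : ℂ[X]) ^ (i : ℕ)
  have hdet : (Q.map C * D * B.map C).det ≠ 0 := by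
    have hgram := det_map_C_mul_diagonal_X_pow_mul_transpose_ne_zero Q ht hQ
    rw [← transpose_map, hA.transpose_eq_mul hB hP, Matrix.map_mul, ← Matrix.mul_assoc,
      det_mul] at hgram
    exact left_ne_zero_of_mul hgram
  have hcoeff : (Q.map C * D * B.map C).charpoly.coeff 0 ≠ 0 := fun h => hdet (by
    rw [det_eq_sign_charpoly_coeff, h, mul_zero])
  have hnullity := LinearMap.finrank_range_add_finrank_ker A.mulVecLin
  rw [← Matrix.rank, finrank_fin_fun] at hnullity
  rw [mulmuleyPoly_eq_X_pow_mul hB (by omega), X_pow_dvd_X_pow_mul_iff hcoeff]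
  omega

/-- For a symmetric `N × N` matrix `A` over `ℂ` with Mulmuley polynomial
`p_A(Z)` and `0 ≤ k ≤ N`: `Z^k` divides `p_A(Z)` if and only if the kernel
of `A` has dimension at least `k`. -/
theorem pow_dvd_mulmuley_iff_le_finrank_ker {N : ℕ} (A : Matrix (Fin N) (Fin N) ℂ)
    (hA : A.IsSymm) (k : ℕ) (hk : k ≤ N) :
    (Polynomial.X ^ k ∣ mulmuleyPoly A) ↔
      k ≤ Module.finrank ℂ (LinearMap.ker A.mulVecLin) :=
  pow_dvd_mulmuley_iff_le_finrank_ker_general A hA k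
end
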